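/- arXiv:2501.07068 — 2 statements merged into one kernel-verified Lean document; each statement's English description precedes it below -/
import Mathlib

section
/- For every complex number q with 0 < |q| < 1, Σ_{n=0}^∞ (−1)^n q^{2n} / (1+q^{2n+1}) = Σ_{n=0}^∞ (−1)^n q^n / (1+q^{2n+2}). -/
/-! Expanding `1 / (1 + q^(2n+1))` and `1 / (1 + q^(2n+2))` as geometric series turns both sides
into the two iterated sums of the absolutely convergent double series
`∑_{n,m} (-1)^(n+m) q^(2n(m+1)+m)`, summed first over `m` and first over `n` respectively. -/

section

variable {𝕜 : Type*} [NormedField 𝕜]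

lemma div_one_add_eq_tsum {x : 𝕜} (hx : ‖x‖ < 1) (a : 𝕜) :
    a / (1 + x) = ∑' m : ℕ, a * (-x) ^ m := by
  rw [tsum_mul_left, tsum_geometric_of_norm_lt_one (by rwa [norm_neg]), sub_neg_eq_add,
    div_eq_mul_inv]

lemma norm_pow_lt_one {q : 𝕜} (hq : ‖q‖ < 1) {k : ℕ} (hk : k ≠ 0) : ‖q ^ k‖ < 1 := by
  rw [norm_pow]
  exact pow_lt_one₀ (norm_nonneg q) hq hk

def alternatingDoubleTerm (q : 𝕜) (n m : ℕ) : 𝕜 :=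
  (-1) ^ (n + m) * q ^ (2 * n * (m + 1) + m)

lemma alternatingDoubleTerm_eq_row (q : 𝕜) (n m : ℕ) :
    alternatingDoubleTerm q n m = (-1) ^ n * q ^ (2 * n) * (-q ^ (2 * n + 1)) ^ m := by
  rw [alternatingDoubleTerm, neg_pow (q ^ (2 * n + 1)),
    show 2 * n * (m + 1) + m = 2 * n + (2 * n + 1) * m by ring, pow_add,
    pow_add, pow_mul]
  ring

lemma alternatingDoubleTerm_eq_column (q : 𝕜) (n m : ℕ) :
    alternatingDoubleTerm q m n = (-1) ^ n * q ^ n * (-q ^ (2 * n + 2)) ^ m := by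
  rw [alternatingDoubleTerm, neg_pow (q ^ (2 * n + 2)),
    show 2 * m * (n + 1) + n = n + (2 * n + 2) * m by ring, pow_add,
    pow_add, pow_mul]
  ring

lemma summable_alternatingDoubleTerm [CompleteSpace 𝕜] {q : 𝕜} (hq : ‖q‖ < 1) :
    Summable (Function.uncurry (alternatingDoubleTerm q)) := by
  have hq0 := norm_nonneg q
  refine Summable.of_norm_bounded (g := fun p : ℕ × ℕ => ‖q‖ ^ p.1 * ‖q‖ ^ p.2)
    ((summable_geometric_of_lt_one hq0 hq).mul_of_nonneg (summable_geometric_of_lt_one hq0 hq)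
      (pow_nonneg hq0) (pow_nonneg hq0)) ?_
  rintro ⟨n, m⟩
  simp only [Function.uncurry_apply_pair, alternatingDoubleTerm, norm_mul, norm_pow, norm_neg,
    norm_one, one_pow, one_mul, ← pow_add]
  exact pow_le_pow_of_le_one hq0 hq.le (by nlinarith)

lemma row_eq_tsum_alternatingDoubleTerm {q : 𝕜} (hq : ‖q‖ < 1) (n : ℕ) :
    (-1) ^ n * q ^ (2 * n) / (1 + q ^ (2 * n + 1)) = ∑' m, alternatingDoubleTerm q n m := by
  rw [div_one_add_eq_tsum (norm_pow_lt_one hq (by omega))]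
  exact tsum_congr fun m => (alternatingDoubleTerm_eq_row q n m).symm

lemma column_eq_tsum_alternatingDoubleTerm {q : 𝕜} (hq : ‖q‖ < 1) (n : ℕ) :
    (-1) ^ n * q ^ n / (1 + q ^ (2 * n + 2)) = ∑' m, alternatingDoubleTerm q m n := by
  rw [div_one_add_eq_tsum (norm_pow_lt_one hq (by omega))]
  exact tsum_congr fun m => (alternatingDoubleTerm_eq_column q n m).symm

end

theorem stmt8_general (q : ℂ) (h1 : ‖q‖ < 1) :
    (∑' n : ℕ, (-1) ^ n * q ^ (2 * n) / (1 + q ^ (2 * n + 1))) =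
      ∑' n : ℕ, (-1) ^ n * q ^ n / (1 + q ^ (2 * n + 2)) := by
  calc ∑' n : ℕ, (-1) ^ n * q ^ (2 * n) / (1 + q ^ (2 * n + 1))
      = ∑' (n : ℕ) (m : ℕ), alternatingDoubleTerm q n m :=
        tsum_congr (row_eq_tsum_alternatingDoubleTerm h1)
    _ = ∑' (m : ℕ) (n : ℕ), alternatingDoubleTerm q n m :=
        (summable_alternatingDoubleTerm h1).tsum_comm.symm
    _ = ∑' n : ℕ, (-1) ^ n * q ^ n / (1 + q ^ (2 * n + 2)) :=
        (tsum_congr (column_eq_tsum_alternatingDoubleTerm h1)).symm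

theorem stmt8 (q : ℂ) (h0 : 0 < ‖q‖) (h1 : ‖q‖ < 1) :
    (∑' n : ℕ, (-1) ^ n * q ^ (2 * n) / (1 + q ^ (2 * n + 1))) =
      ∑' n : ℕ, (-1) ^ n * q ^ n / (1 + q ^ (2 * n + 2)) :=
  stmt8_general q h1
end

section
/- For every complex number q with 0 < |q| < 1, Σ_{n=1}^∞ q^{2n} / ((q^{2n};q^2)_{n+1} (q^{2n+1};q)_∞) = (q^2 / ((q;q)_∞ (1+q)(1+q^2))) · Σ_{n=0}^∞ (q^2;q^2)_n q^{2n} / ((−q^3;q^2)_n (−q^4;q^2)_n). -/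
/-!
The identity holds term by term. Splitting `(q;q)_∞ = (q;q)_{2n+2} (q^{2n+3};q)_∞` and
`(-q;q)_{2n+2} = (1+q)(-q³;q²)_n (1+q²)(-q⁴;q²)_n` into even and odd factors, the `n`-th term
on the right has denominator `(q;q)_{2n+2}(-q;q)_{2n+2}(q^{2n+3};q)_∞`, and
`(q;q)_{2n+2}(-q;q)_{2n+2} = (q²;q²)_{2n+2} = (q²;q²)_n (q^{2n+2};q²)_{n+2}`;
the factor `(q²;q²)_n` then cancels against the numerator.
-/

/-- Finite q-Pochhammer symbol `(a; q)_n`. -/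
noncomputable def qPoch (a q : ℂ) (n : ℕ) : ℂ := ∏ j ∈ Finset.range n, (1 - a * q ^ j)

/-- Infinite q-Pochhammer symbol `(a; q)_∞`. -/
noncomputable def qPochInf (a q : ℂ) : ℂ := ∏' j : ℕ, (1 - a * q ^ j)

lemma qPoch_add (a q : ℂ) (s t : ℕ) :
    qPoch a q (s + t) = qPoch a q s * qPoch (a * q ^ s) q t := by
  rw [qPoch, qPoch, qPoch, Finset.prod_range_add]
  congr 1
  exact Finset.prod_congr rfl fun j _ => by rw [pow_add]; ring

lemma qPoch_succ (a q : ℂ) (n : ℕ) :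
    qPoch a q (n + 1) = (1 - a) * qPoch (a * q) q n := by
  rw [add_comm, qPoch_add]
  simp [qPoch]

lemma qPoch_mul_qPoch_neg (a q : ℂ) (n : ℕ) :
    qPoch a q n * qPoch (-a) q n = qPoch (a ^ 2) (q ^ 2) n := by
  rw [qPoch, qPoch, qPoch, ← Finset.prod_mul_distrib]
  exact Finset.prod_congr rfl fun j _ => by ring

lemma qPoch_two_mul (a q : ℂ) (n : ℕ) :
    qPoch a q (2 * n) = qPoch a (q ^ 2) n * qPoch (a * q) (q ^ 2) n := by
  induction n with
  | zero => simp [qPoch]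
  | succ n ih =>
    rw [show 2 * (n + 1) = 2 * n + 1 + 1 by ring]
    simp only [qPoch, Finset.prod_range_succ] at ih ⊢
    rw [ih]
    ring

lemma qPoch_ne_zero {a q : ℂ} (ha : ‖a‖ < 1) (hq : ‖q‖ ≤ 1) (n : ℕ) : qPoch a q n ≠ 0 := by
  refine Finset.prod_ne_zero_iff.mpr fun j _ => sub_ne_zero.mpr fun h => ?_
  have : ‖a * q ^ j‖ < 1 := by
    rw [norm_mul, norm_pow]
    exact mul_lt_one_of_nonneg_of_lt_one_left (norm_nonneg a) ha (pow_le_one₀ (norm_nonneg q) hq)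
  rw [← h, norm_one] at this
  exact this.false

lemma multipliable_one_sub_mul_pow (a : ℂ) {q : ℂ} (hq : ‖q‖ < 1) :
    Multipliable fun j : ℕ => 1 - a * q ^ j := by
  simp_rw [sub_eq_add_neg]
  refine multipliable_one_add_of_summable ?_
  simpa [norm_pow] using (summable_geometric_of_lt_one (norm_nonneg q) hq).mul_left ‖a‖

lemma qPochInf_eq_qPoch_mul_qPochInf (a : ℂ) {q : ℂ} (hq : ‖q‖ < 1) (k : ℕ) :
    qPochInf a q = qPoch a q k * qPochInf (a * q ^ k) q := by
  have htail : (fun j : ℕ => 1 - a * q ^ (j + k)) = fun j => 1 - a * q ^ k * q ^ j := by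
    ext j; rw [pow_add]; ring
  have hsplit := Multipliable.prod_mul_tprod_nat_mul' (f := fun j : ℕ => 1 - a * q ^ j) (k := k)
    (htail ▸ multipliable_one_sub_mul_pow (a * q ^ k) hq)
  rw [qPochInf, qPochInf, qPoch, ← hsplit, htail]

lemma qPoch_neg_self_two_mul_add_two (q : ℂ) (n : ℕ) :
    qPoch (-q) q (2 * (n + 1)) =
      (1 + q) * qPoch (-q ^ 3) (q ^ 2) n * ((1 + q ^ 2) * qPoch (-q ^ 4) (q ^ 2) n) := by
  rw [qPoch_two_mul, qPoch_succ, qPoch_succ]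
  ring_nf

lemma qPoch_sq_two_mul_add_two (q : ℂ) (n : ℕ) :
    qPoch (q ^ 2) (q ^ 2) (2 * (n + 1)) =
      qPoch (q ^ 2) (q ^ 2) n * qPoch (q ^ (2 * (n + 1))) (q ^ 2) (n + 2) := by
  rw [show 2 * (n + 1) = n + (n + 2) by ring, qPoch_add, ← pow_succ', ← pow_mul,
    show 2 * (n + 1) = n + (n + 2) by ring]

lemma qPochInf_self_mul_qPoch_neg {q : ℂ} (hq : ‖q‖ < 1) (n : ℕ) :
    qPochInf q q * ((1 + q) * qPoch (-q ^ 3) (q ^ 2) n * ((1 + q ^ 2) * qPoch (-q ^ 4) (q ^ 2) n)) =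
      qPoch (q ^ 2) (q ^ 2) n * qPoch (q ^ (2 * (n + 1))) (q ^ 2) (n + 2) *
        qPochInf (q ^ (2 * (n + 1) + 1)) q := by
  rw [← qPoch_neg_self_two_mul_add_two, ← qPoch_sq_two_mul_add_two, ← qPoch_mul_qPoch_neg,
    qPochInf_eq_qPoch_mul_qPochInf q hq (2 * (n + 1)), ← pow_succ']
  ring

theorem stmt12_general (q : ℂ) (h1 : ‖q‖ < 1) :
    (∑' n : ℕ, q ^ (2 * (n + 1)) /
        (qPoch (q ^ (2 * (n + 1))) (q ^ 2) (n + 2) * qPochInf (q ^ (2 * (n + 1) + 1)) q)) =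
      (q ^ 2 / (qPochInf q q * (1 + q) * (1 + q ^ 2))) *
        ∑' n : ℕ, qPoch (q ^ 2) (q ^ 2) n * q ^ (2 * n) /
          (qPoch (-q ^ 3) (q ^ 2) n * qPoch (-q ^ 4) (q ^ 2) n) := by
  rw [← tsum_mul_left]
  refine tsum_congr fun n => ?_
  have hq2 : ‖q ^ 2‖ < 1 := by rw [norm_pow]; exact pow_lt_one₀ (norm_nonneg q) h1 two_ne_zero
  have hnum : q ^ 2 * (qPoch (q ^ 2) (q ^ 2) n * q ^ (2 * n)) =
      qPoch (q ^ 2) (q ^ 2) n * q ^ (2 * (n + 1)) := by ring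
  have hden : qPochInf q q * (1 + q) * (1 + q ^ 2) *
        (qPoch (-q ^ 3) (q ^ 2) n * qPoch (-q ^ 4) (q ^ 2) n) =
      qPoch (q ^ 2) (q ^ 2) n *
        (qPoch (q ^ (2 * (n + 1))) (q ^ 2) (n + 2) * qPochInf (q ^ (2 * (n + 1) + 1)) q) := by
    linear_combination qPochInf_self_mul_qPoch_neg h1 n
  rw [div_mul_div_comm, hnum, hden, mul_div_mul_left _ _ (qPoch_ne_zero hq2 hq2.le n)]

theorem stmt12 (q : ℂ) (h0 : 0 < ‖q‖) (h1 : ‖q‖ < 1) :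
    (∑' n : ℕ, q ^ (2 * (n + 1)) /
        (qPoch (q ^ (2 * (n + 1))) (q ^ 2) (n + 2) * qPochInf (q ^ (2 * (n + 1) + 1)) q)) =
      (q ^ 2 / (qPochInf q q * (1 + q) * (1 + q ^ 2))) *
        ∑' n : ℕ, qPoch (q ^ 2) (q ^ 2) n * q ^ (2 * n) /
          (qPoch (-q ^ 3) (q ^ 2) n * qPoch (-q ^ 4) (q ^ 2) n) :=
  stmt12_general q h1
end
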